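/- Let c ∈ ℝ and let Z have the Gaussian distribution N(c,1). Then the law of the two-sided p-value P = 2(1 − Φ(|Z|)) is absolutely continuous on (0,1) with density p(P | c) = (1/2)·exp{ (c/2)·(2·Φ^{−1}(1 − P/2) − c) } + (1/2)·exp{ −(c/2)·(2·Φ^{−1}(1 − P/2) + c) }; that is, the pushforward of N(c,1) under z ↦ 2(1 − Φ(|z|)) equals Lebesgue measure on (0,1) weighted by this density, where Φ^{−1}(1 − P/2) denotes the unique real t with Φ(t) = 1 − P/2. -/

import Mathlib

open MeasureTheory

/-- The standard normal density φ(t) = (1/√(2π))·exp(−t²/2). -/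
noncomputable def stdNormalPDF (t : ℝ) : ℝ :=
  (Real.sqrt (2 * Real.pi))⁻¹ * Real.exp (-t ^ 2 / 2)

/-- The standard normal cumulative distribution function Φ(t) = ∫_{−∞}^t φ(s) ds. -/
noncomputable def stdNormalCDF (t : ℝ) : ℝ :=
  ∫ s in Set.Iic t, stdNormalPDF s

/-- The Gaussian measure N(c,1) on ℝ, with density x ↦ φ(x − c) w.r.t. Lebesgue. -/
noncomputable def gaussianMeasure (c : ℝ) : Measure ℝ :=
  volume.withDensity fun x => ENNReal.ofReal (stdNormalPDF (x - c))

/-!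
Folding `N(c, 1)` at `0` gives `|Z|` the density `φ(t - c) + φ(-t - c)` on `(0, ∞)`. The
p-value is the image of `|Z|` under `t ↦ 2 (1 - Φ t)`, a strictly decreasing map of `(0, ∞)`
onto `(0, 1)` with derivative `-2 φ t`. By the change of variables formula, `P` has density
`(φ(t - c) + φ(-t - c)) / (2 φ t)` at `t = Φ⁻¹(1 - P / 2)`, and the Gaussian likelihood ratio
`φ(t - c) / φ t = exp (c t - c² / 2)` turns this into the stated formula.
-/

open Set Real

open scoped ENNReal

namespace MeasureTheory

theorem map_restrict_withDensity_abs_deriv_mul {s : Set ℝ} {f f' : ℝ → ℝ}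
    (hs : MeasurableSet s) (hf_meas : Measurable f)
    (hf' : ∀ x ∈ s, HasDerivWithinAt f (f' x) s x) (hf : InjOn f s) (g : ℝ → ℝ≥0∞) :
    Measure.map f ((volume.restrict s).withDensity fun x => ENNReal.ofReal |f' x| * g (f x)) =
      (volume.restrict (f '' s)).withDensity g := by
  ext t ht
  have hpre : MeasurableSet (f ⁻¹' t ∩ s) := (hf_meas ht).inter hs
  rw [Measure.map_apply hf_meas ht, withDensity_apply _ (hf_meas ht), withDensity_apply _ ht,
    Measure.restrict_restrict (hf_meas ht), Measure.restrict_restrict ht,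
    ← image_preimage_inter, lintegral_image_eq_lintegral_abs_deriv_mul hpre
      (fun x hx => (hf' x hx.2).mono inter_subset_right) (hf.mono inter_subset_right)]

theorem map_abs_restrict_Ioi_withDensity (f : ℝ → ℝ≥0∞) :
    Measure.map abs ((volume.restrict (Ioi 0)).withDensity f) =
      (volume.restrict (Ioi 0)).withDensity f := by
  have hderiv : ∀ x ∈ Ioi (0 : ℝ), HasDerivWithinAt abs 1 (Ioi 0) x := fun x hx =>
    (hasDerivAt_id x).hasDerivWithinAt.congr (fun y hy => abs_of_pos hy) (abs_of_pos hx)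
  have hinj : InjOn abs (Ioi (0 : ℝ)) := fun x hx y hy h => by
    rwa [abs_of_pos hx, abs_of_pos hy] at h
  have himage : abs '' Ioi (0 : ℝ) = Ioi 0 := by
    rw [image_congr (f := abs) (g := id) fun x hx => abs_of_pos (mem_Ioi.1 hx), image_id]
  convert map_restrict_withDensity_abs_deriv_mul measurableSet_Ioi measurable_abs
    hderiv hinj f using 2
  · exact withDensity_congr_ae <| ae_restrict_of_forall_mem measurableSet_Ioi fun x hx => by
      simp [abs_of_pos (mem_Ioi.1 hx)]
  · rw [himage]

theorem map_abs_restrict_Iio_withDensity (f : ℝ → ℝ≥0∞) :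
    Measure.map abs ((volume.restrict (Iio 0)).withDensity f) =
      (volume.restrict (Ioi 0)).withDensity fun t => f (-t) := by
  have hderiv : ∀ x ∈ Iio (0 : ℝ), HasDerivWithinAt abs (-1) (Iio 0) x := fun x hx =>
    (hasDerivAt_neg x).hasDerivWithinAt.congr (fun y hy => abs_of_neg hy) (abs_of_neg hx)
  have hinj : InjOn abs (Iio (0 : ℝ)) := fun x hx y hy h => by
    rwa [abs_of_neg hx, abs_of_neg hy, neg_inj] at h
  have himage : abs '' Iio (0 : ℝ) = Ioi 0 := by
    rw [image_congr (f := abs) (g := Neg.neg) fun x hx => abs_of_neg (mem_Iio.1 hx)]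
    simp
  convert map_restrict_withDensity_abs_deriv_mul measurableSet_Iio measurable_abs
    hderiv hinj (fun t => f (-t)) using 2
  · exact withDensity_congr_ae <| ae_restrict_of_forall_mem measurableSet_Iio fun x hx => by
      simp [abs_of_neg (mem_Iio.1 hx)]
  · rw [himage]

theorem map_abs_withDensity {f : ℝ → ℝ≥0∞} (hf : Measurable f) :
    Measure.map abs (volume.withDensity f) =
      (volume.restrict (Ioi 0)).withDensity fun t => f t + f (-t) := by
  have hsplit : volume.withDensity f =
      (volume.restrict (Ioi 0)).withDensity f + (volume.restrict (Iio 0)).withDensity f := by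
    rw [← withDensity_add_measure, restrict_Ioi_eq_restrict_Ici, ← compl_Iio,
      add_comm, Measure.restrict_add_restrict_compl measurableSet_Iio]
  rw [hsplit, Measure.map_add _ _ measurable_abs, map_abs_restrict_Ioi_withDensity,
    map_abs_restrict_Iio_withDensity]
  exact (withDensity_add_left hf _).symm

end MeasureTheory

theorem stdNormalPDF_eq_gaussianPDFReal : stdNormalPDF = ProbabilityTheory.gaussianPDFReal 0 1 := by
  funext x
  simp [stdNormalPDF, ProbabilityTheory.gaussianPDFReal]

theorem stdNormalPDF_pos (t : ℝ) : 0 < stdNormalPDF t := by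
  rw [stdNormalPDF_eq_gaussianPDFReal]
  exact ProbabilityTheory.gaussianPDFReal_pos 0 1 t one_ne_zero

theorem stdNormalPDF_neg (t : ℝ) : stdNormalPDF (-t) = stdNormalPDF t := by
  simp [stdNormalPDF]

theorem continuous_stdNormalPDF : Continuous stdNormalPDF := by
  unfold stdNormalPDF
  fun_prop

theorem integrable_stdNormalPDF : Integrable stdNormalPDF := by
  rw [stdNormalPDF_eq_gaussianPDFReal]
  exact ProbabilityTheory.integrable_gaussianPDFReal 0 1

theorem integral_stdNormalPDF : ∫ x, stdNormalPDF x = 1 := by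
  rw [stdNormalPDF_eq_gaussianPDFReal]
  exact ProbabilityTheory.integral_gaussianPDFReal_eq_one 0 one_ne_zero

theorem stdNormalPDF_sub_add_stdNormalPDF_neg_sub (t c : ℝ) :
    stdNormalPDF (t - c) + stdNormalPDF (-t - c) =
      2 * stdNormalPDF t *
        (1 / 2 * exp (c / 2 * (2 * t - c)) + 1 / 2 * exp (-(c / 2) * (2 * t + c))) := by
  have hplus : exp (-(t - c) ^ 2 / 2) = exp (-t ^ 2 / 2) * exp (c / 2 * (2 * t - c)) := by
    rw [← exp_add]; ring_nf
  have hminus : exp (-(-t - c) ^ 2 / 2) = exp (-t ^ 2 / 2) * exp (-(c / 2) * (2 * t + c)) := by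
    rw [← exp_add]; ring_nf
  simp only [stdNormalPDF, hplus, hminus]
  ring

theorem hasDerivAt_stdNormalCDF (t : ℝ) : HasDerivAt stdNormalCDF (stdNormalPDF t) t := by
  have hsplit : stdNormalCDF = fun u => stdNormalCDF 0 + ∫ x in (0 : ℝ)..u, stdNormalPDF x := by
    funext u
    rw [stdNormalCDF, stdNormalCDF, ← intervalIntegral.integral_Iic_sub_Iic
      integrable_stdNormalPDF.integrableOn integrable_stdNormalPDF.integrableOn]
    ring
  rw [hsplit]
  exact (intervalIntegral.integral_hasDerivAt_right integrable_stdNormalPDF.intervalIntegrable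
    (continuous_stdNormalPDF.stronglyMeasurableAtFilter _ _)
    continuous_stdNormalPDF.continuousAt).const_add _

theorem strictMono_stdNormalCDF : StrictMono stdNormalCDF :=
  strictMono_of_deriv_pos fun x => (hasDerivAt_stdNormalCDF x).deriv ▸ stdNormalPDF_pos x

theorem setIntegral_stdNormalPDF_pos {s : Set ℝ} (hpos : volume s ≠ 0) :
    0 < ∫ x in s, stdNormalPDF x := by
  rw [setIntegral_pos_iff_support_of_nonneg_ae
    (Filter.Eventually.of_forall fun x => (stdNormalPDF_pos x).le)
    integrable_stdNormalPDF.integrableOn,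
    Function.support_eq_univ fun x => (stdNormalPDF_pos x).ne', univ_inter]
  exact pos_iff_ne_zero.2 hpos

theorem stdNormalCDF_add_integral_Ioi (t : ℝ) :
    stdNormalCDF t + ∫ x in Ioi t, stdNormalPDF x = 1 := by
  rw [stdNormalCDF, ← compl_Iic, integral_add_compl measurableSet_Iic integrable_stdNormalPDF,
    integral_stdNormalPDF]

theorem stdNormalCDF_pos (t : ℝ) : 0 < stdNormalCDF t :=
  setIntegral_stdNormalPDF_pos (by simp)

theorem stdNormalCDF_lt_one (t : ℝ) : stdNormalCDF t < 1 := by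
  linarith [stdNormalCDF_add_integral_Ioi t,
    setIntegral_stdNormalPDF_pos (s := Ioi t) (by simp)]

theorem stdNormalCDF_zero : stdNormalCDF 0 = 1 / 2 := by
  have hsymm : ∫ x in Ioi (0 : ℝ), stdNormalPDF x = stdNormalCDF 0 := by
    rw [stdNormalCDF, ← neg_zero, ← integral_comp_neg_Iic]
    simp only [neg_zero, stdNormalPDF_neg]
  linarith [stdNormalCDF_add_integral_Ioi 0]

noncomputable def pValueOfAbs (t : ℝ) : ℝ :=
  2 * (1 - stdNormalCDF t)

theorem hasDerivAt_pValueOfAbs (t : ℝ) : HasDerivAt pValueOfAbs (-(2 * stdNormalPDF t)) t := by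
  unfold pValueOfAbs
  simpa using ((hasDerivAt_stdNormalCDF t).const_sub 1).const_mul 2

theorem strictAnti_pValueOfAbs : StrictAnti pValueOfAbs := fun _ _ h => by
  have := strictMono_stdNormalCDF h
  unfold pValueOfAbs
  linarith

theorem measurable_pValueOfAbs : Measurable pValueOfAbs :=
  strictAnti_pValueOfAbs.antitone.measurable

theorem one_sub_pValueOfAbs_div_two (t : ℝ) : 1 - pValueOfAbs t / 2 = stdNormalCDF t := by
  unfold pValueOfAbs
  ring

theorem pValueOfAbs_image_Ioi {Φinv : ℝ → ℝ}
    (hΦinv : ∀ y ∈ Ioo (0 : ℝ) 1, stdNormalCDF (Φinv y) = y) :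
    pValueOfAbs '' Ioi 0 = Ioo 0 1 := by
  ext y
  constructor
  · rintro ⟨t, ht, rfl⟩
    have := strictMono_stdNormalCDF (mem_Ioi.1 ht)
    rw [stdNormalCDF_zero] at this
    unfold pValueOfAbs
    constructor <;> linarith [stdNormalCDF_lt_one t]
  · rintro ⟨hy0, hy1⟩
    have hΦ := hΦinv (1 - y / 2) ⟨by linarith, by linarith⟩
    refine ⟨Φinv (1 - y / 2), ?_, ?_⟩
    · rw [mem_Ioi, ← strictMono_stdNormalCDF.lt_iff_lt, hΦ, stdNormalCDF_zero]
      linarith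
    · rw [pValueOfAbs, hΦ]
      ring

/-- Let Z ~ N(c,1). The law of the two-sided p-value P = 2(1 − Φ(|Z|)) is absolutely
continuous on (0,1) with density
p(P | c) = (1/2)·exp{(c/2)(2Φ⁻¹(1 − P/2) − c)} + (1/2)·exp{−(c/2)(2Φ⁻¹(1 − P/2) + c)};
here Φ⁻¹ is any function `Φinv` satisfying Φ(Φinv y) = y for all y ∈ (0,1). -/
theorem stmt_16 (c : ℝ) (Φinv : ℝ → ℝ)
    (hΦinv : ∀ y ∈ Set.Ioo (0 : ℝ) 1, stdNormalCDF (Φinv y) = y) :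
    Measure.map (fun z : ℝ => 2 * (1 - stdNormalCDF |z|)) (gaussianMeasure c) =
      (volume.restrict (Set.Ioo (0 : ℝ) 1)).withDensity fun P =>
        ENNReal.ofReal
          (1 / 2 * Real.exp (c / 2 * (2 * Φinv (1 - P / 2) - c)) +
           1 / 2 * Real.exp (-(c / 2) * (2 * Φinv (1 - P / 2) + c))) := by
  set density : ℝ → ℝ≥0∞ := fun P => ENNReal.ofReal
    (1 / 2 * Real.exp (c / 2 * (2 * Φinv (1 - P / 2) - c)) +
      1 / 2 * Real.exp (-(c / 2) * (2 * Φinv (1 - P / 2) + c)))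
  have hΦinv_left (t : ℝ) : Φinv (stdNormalCDF t) = t :=
    strictMono_stdNormalCDF.injective <|
      hΦinv _ ⟨stdNormalCDF_pos t, stdNormalCDF_lt_one t⟩
  have hdensity : (fun t => ENNReal.ofReal (stdNormalPDF (t - c)) +
        ENNReal.ofReal (stdNormalPDF (-t - c))) =
      fun t => ENNReal.ofReal |-(2 * stdNormalPDF t)| * density (pValueOfAbs t) := by
    funext t
    simp only [density]
    rw [one_sub_pValueOfAbs_div_two, hΦinv_left, abs_neg,
      abs_of_pos (by linarith [stdNormalPDF_pos t]),
      ← ENNReal.ofReal_add (stdNormalPDF_pos _).le (stdNormalPDF_pos _).le,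
      ← ENNReal.ofReal_mul (by linarith [stdNormalPDF_pos t]),
      stdNormalPDF_sub_add_stdNormalPDF_neg_sub]
  have hdensity_meas : Measurable fun x => ENNReal.ofReal (stdNormalPDF (x - c)) :=
    (continuous_stdNormalPDF.comp (continuous_sub_right c)).measurable.ennreal_ofReal
  calc Measure.map (fun z : ℝ => 2 * (1 - stdNormalCDF |z|)) (gaussianMeasure c)
      = Measure.map pValueOfAbs (Measure.map abs (gaussianMeasure c)) :=
        (Measure.map_map measurable_pValueOfAbs measurable_abs).symm
    _ = _ := by
      rw [gaussianMeasure, map_abs_withDensity hdensity_meas, hdensity,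
        map_restrict_withDensity_abs_deriv_mul measurableSet_Ioi measurable_pValueOfAbs
          (fun t _ => (hasDerivAt_pValueOfAbs t).hasDerivWithinAt)
          strictAnti_pValueOfAbs.injective.injOn,
        pValueOfAbs_image_Ioi hΦinv]
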